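/- arXiv:1707.04837 — 3 statements merged into one kernel-verified Lean document; each statement's English description precedes it below -/
import Mathlib

section
/- Let d_n ∈ (0,∞) be the unique solution of a(e^{−d_n}) = n for large n. Then b(e^{−d_n}) ~ 3 n^{4/3}/(2ζ(3))^{1/3} as n→∞. -/
open Filter Asymptotics

/-- `a(r) = Σ_{j≥1} j² rʲ/(1-rʲ)`. -/
noncomputable def aQ (r : ℝ) : ℝ := ∑' j : ℕ, ((j + 1 : ℝ) ^ 2 * r ^ (j + 1)) / (1 - r ^ (j + 1))

/-- `b(r) = Σ_{j≥1} j³ rʲ/(1-rʲ)²`. -/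
noncomputable def bQ (r : ℝ) : ℝ := ∑' j : ℕ, ((j + 1 : ℝ) ^ 3 * r ^ (j + 1)) / (1 - r ^ (j + 1)) ^ 2

/-- `ζ(3)` as a real number. -/
noncomputable def zeta3 : ℝ := (riemannZeta 3).re

/-!
Expanding each term of the Lambert series as a geometric series and summing first over the
other index gives `t³ a(e^{-t}) = Σ_{k≥1} Φ(kt)/k³` and `t⁴ b(e^{-t}) = Σ_{k≥1} Ψ(kt)/k³`, where,
with `y = e^{-s}`, the kernels `Φ(s) = s³ y(1+y)/(1-y)³` and `Ψ(s) = s⁴ y(1+4y+y²)/(1-y)⁴`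
(`aQKernel`, `bQKernel`) come from the closed forms of `Σ j² yʲ` and `Σ j³ yʲ`. Since
`s/(1-e^{-s}) ≤ 1+s` and `(1+s)^m e^{-s} ≤ m^m`, both kernels are bounded on `(0, ∞)`; they tend
to `2` and `6` as `s → 0⁺`, so dominated convergence gives `t³ a(e^{-t}) → 2ζ(3)` and
`t⁴ b(e^{-t}) → 6ζ(3)`. The uniform bound `n d_n³ ≤ 54 ζ(3)` forces `d_n → 0`, hence
`n d_n³ → 2ζ(3)` and `b(e^{-d_n}) ~ 6ζ(3) d_n⁻⁴ ~ 6ζ(3) (n / 2ζ(3))^{4/3}`.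
-/

open Real Topology

section PowerSeries

variable {𝕜 : Type*} [NormedField 𝕜] {y : 𝕜}

lemma hasSum_pow_succ (hy : ‖y‖ < 1) : HasSum (fun n : ℕ => y ^ (n + 1)) (y / (1 - y)) := by
  simpa [pow_succ', div_eq_mul_inv] using (hasSum_geometric_of_norm_lt_one hy).mul_left y

lemma hasSum_succ_mul_pow_succ (hy : ‖y‖ < 1) :
    HasSum (fun n : ℕ => ((n : 𝕜) + 1) * y ^ (n + 1)) (y / (1 - y) ^ 2) := by
  rw [div_eq_mul_one_div]
  refine ((hasSum_choose_mul_geometric_of_norm_lt_one 1 hy).mul_left y).congr_fun fun n => ?_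
  simp only [Nat.choose_one_right]
  push_cast
  ring

variable [CharZero 𝕜]

lemma hasSum_succ_sq_mul_pow_succ (hy : ‖y‖ < 1) :
    HasSum (fun n : ℕ => ((n : 𝕜) + 1) ^ 2 * y ^ (n + 1)) (y * (1 + y) / (1 - y) ^ 3) := by
  have hy1 : 1 - y ≠ 0 := sub_ne_zero.2 fun h => by simp [← h] at hy
  rw [show y * (1 + y) / (1 - y) ^ 3 = y * (2 * (1 / (1 - y) ^ (2 + 1)) - 1 / (1 - y) ^ (1 + 1))
    by field_simp; ring]
  refine ((hasSum_choose_mul_geometric_of_norm_lt_one 2 hy).mul_left 2 |>.sub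
    (hasSum_choose_mul_geometric_of_norm_lt_one 1 hy)).mul_left y |>.congr_fun fun n => ?_
  rw [Nat.cast_choose_two, Nat.choose_one_right]
  push_cast
  ring

lemma hasSum_succ_cube_mul_pow_succ (hy : ‖y‖ < 1) :
    HasSum (fun n : ℕ => ((n : 𝕜) + 1) ^ 3 * y ^ (n + 1))
      (y * (1 + 4 * y + y ^ 2) / (1 - y) ^ 4) := by
  have hy1 : 1 - y ≠ 0 := sub_ne_zero.2 fun h => by simp [← h] at hy
  rw [show y * (1 + 4 * y + y ^ 2) / (1 - y) ^ 4 = y * (6 * (1 / (1 - y) ^ (3 + 1)) -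
    6 * (1 / (1 - y) ^ (2 + 1)) + 1 / (1 - y) ^ (1 + 1)) by field_simp; ring]
  refine (((hasSum_choose_mul_geometric_of_norm_lt_one 3 hy).mul_left 6 |>.sub
    ((hasSum_choose_mul_geometric_of_norm_lt_one 2 hy).mul_left 6)).add
    (hasSum_choose_mul_geometric_of_norm_lt_one 1 hy)).mul_left y |>.congr_fun fun n => ?_
  rw [Nat.cast_choose_two, Nat.cast_choose_eq_ascPochhammer_div, Nat.choose_one_right]
  simp only [Nat.add_one_sub_one, Nat.reduceSubDiff, Nat.cast_add, Nat.cast_one,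
    ascPochhammer_succ_eval, ascPochhammer_one, Polynomial.eval_X, Nat.cast_ofNat, Nat.factorial,
    Nat.succ_eq_add_one, Nat.reduceAdd, zero_add, mul_one, Nat.reduceMul]
  ring

end PowerSeries

lemma summable_succ_pow_mul_geometric {R : Type*} [NormedCommRing R] [HasSummableGeomSeries R]
    (a : ℕ) {r : R} (hr : ‖r‖ < 1) : Summable (fun n : ℕ => ((n : R) + 1) ^ a * r ^ n) := by
  simp_rw [add_pow, one_pow, mul_one, Finset.sum_mul]
  exact summable_sum fun i _ => by
    simpa [mul_right_comm] using (summable_pow_mul_geometric_of_norm_lt_one i hr).mul_right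
      ((a.choose i : ℕ) : R)

section Lambert

lemma norm_pow_succ_lt_one {x : ℝ} (hx0 : 0 ≤ x) (hx1 : x < 1) (m : ℕ) : ‖x ^ (m + 1)‖ < 1 := by
  rw [norm_pow, Real.norm_of_nonneg hx0]
  exact pow_lt_one₀ hx0 hx1 m.succ_ne_zero

lemma summable_succ_pow_mul_succ_pow_mul_pow_mul (a b : ℕ) {x : ℝ} (hx0 : 0 ≤ x) (hx1 : x < 1) :
    Summable (fun p : ℕ × ℕ => ((p.1 : ℝ) + 1) ^ a * (((p.2 : ℝ) + 1) ^ b *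
      x ^ ((p.1 + 1) * (p.2 + 1)))) := by
  have hx : ‖x‖ < 1 := by rwa [Real.norm_of_nonneg hx0]
  refine Summable.of_nonneg_of_le (fun p => by positivity) (fun p => ?_)
    ((summable_succ_pow_mul_geometric a hx).mul_of_nonneg (summable_succ_pow_mul_geometric b hx)
      (fun _ => by positivity) (fun _ => by positivity))
  have hexp : p.1 + p.2 ≤ (p.1 + 1) * (p.2 + 1) := by nlinarith
  calc ((p.1 : ℝ) + 1) ^ a * (((p.2 : ℝ) + 1) ^ b * x ^ ((p.1 + 1) * (p.2 + 1)))
      ≤ ((p.1 : ℝ) + 1) ^ a * (((p.2 : ℝ) + 1) ^ b * x ^ (p.1 + p.2)) := by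
        gcongr ?_ * (_ * ?_)
        exact pow_le_pow_of_le_one hx0 hx1.le hexp
    _ = ((p.1 : ℝ) + 1) ^ a * x ^ p.1 * (((p.2 : ℝ) + 1) ^ b * x ^ p.2) := by ring

lemma tsum_succ_pow_mul_tsum_comm (a b : ℕ) {x : ℝ} (hx0 : 0 ≤ x) (hx1 : x < 1) :
    ∑' j : ℕ, ((j : ℝ) + 1) ^ a * ∑' k : ℕ, ((k : ℝ) + 1) ^ b * (x ^ (j + 1)) ^ (k + 1) =
      ∑' k : ℕ, ((k : ℝ) + 1) ^ b * ∑' j : ℕ, ((j : ℝ) + 1) ^ a * (x ^ (k + 1)) ^ (j + 1) := by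
  simp_rw [← tsum_mul_left, ← pow_mul]
  rw [← (summable_succ_pow_mul_succ_pow_mul_pow_mul a b hx0 hx1).tsum_comm]
  exact tsum_congr fun k => tsum_congr fun j => by ring_nf

lemma aQ_eq_tsum {x : ℝ} (hx0 : 0 ≤ x) (hx1 : x < 1) :
    aQ x = ∑' k : ℕ, x ^ (k + 1) * (1 + x ^ (k + 1)) / (1 - x ^ (k + 1)) ^ 3 := by
  have hy := norm_pow_succ_lt_one hx0 hx1
  calc aQ x = ∑' j : ℕ, ((j : ℝ) + 1) ^ 2 * ∑' k : ℕ, ((k : ℝ) + 1) ^ 0 * (x ^ (j + 1)) ^ (k + 1) :=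
        tsum_congr fun j => by simp [(hasSum_pow_succ (hy j)).tsum_eq, mul_div_assoc]
    _ = ∑' k : ℕ, ((k : ℝ) + 1) ^ 0 * ∑' j : ℕ, ((j : ℝ) + 1) ^ 2 * (x ^ (k + 1)) ^ (j + 1) :=
        tsum_succ_pow_mul_tsum_comm 2 0 hx0 hx1
    _ = _ := tsum_congr fun k => by simp [(hasSum_succ_sq_mul_pow_succ (hy k)).tsum_eq]

lemma bQ_eq_tsum {x : ℝ} (hx0 : 0 ≤ x) (hx1 : x < 1) :
    bQ x = ∑' k : ℕ, ((k : ℝ) + 1) *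
      (x ^ (k + 1) * (1 + 4 * x ^ (k + 1) + (x ^ (k + 1)) ^ 2) / (1 - x ^ (k + 1)) ^ 4) := by
  have hy := norm_pow_succ_lt_one hx0 hx1
  calc bQ x = ∑' j : ℕ, ((j : ℝ) + 1) ^ 3 * ∑' k : ℕ, ((k : ℝ) + 1) ^ 1 * (x ^ (j + 1)) ^ (k + 1) :=
        tsum_congr fun j => by simp [(hasSum_succ_mul_pow_succ (hy j)).tsum_eq, mul_div_assoc]
    _ = ∑' k : ℕ, ((k : ℝ) + 1) ^ 1 * ∑' j : ℕ, ((j : ℝ) + 1) ^ 3 * (x ^ (k + 1)) ^ (j + 1) :=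
        tsum_succ_pow_mul_tsum_comm 3 1 hx0 hx1
    _ = _ := tsum_congr fun k => by simp [(hasSum_succ_cube_mul_pow_succ (hy k)).tsum_eq]

end Lambert

section Kernel

lemma one_add_mul_exp_neg_le (s : ℝ) : (1 + s) * exp (-s) ≤ 1 :=
  calc (1 + s) * exp (-s) ≤ exp s * exp (-s) := by
        gcongr
        linarith [add_one_le_exp s]
    _ = 1 := by rw [← exp_add, add_neg_cancel, exp_zero]

lemma div_one_sub_exp_neg_le {s : ℝ} (hs : 0 < s) : s / (1 - exp (-s)) ≤ 1 + s := by
  rw [div_le_iff₀ (sub_pos.2 (exp_lt_one_iff.2 (neg_lt_zero.2 hs)))]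
  linarith [one_add_mul_exp_neg_le s]

lemma one_add_pow_mul_exp_neg_le (m : ℕ) {s : ℝ} (hs : 0 ≤ s) : (1 + s) ^ m * exp (-s) ≤ m ^ m := by
  rcases Nat.eq_zero_or_pos m with rfl | hm
  · simpa using exp_le_one_iff.2 (neg_nonpos.2 hs)
  have hm' : (0 : ℝ) < m := Nat.cast_pos.2 hm
  calc (1 + s) ^ m * exp (-s) ≤ (m * (1 + s / m)) ^ m * exp (-s) := by
        gcongr
        rw [mul_add, mul_div_cancel₀ _ hm'.ne']
        linarith [(Nat.one_le_cast (α := ℝ)).2 hm]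
    _ ≤ (m * exp (s / m)) ^ m * exp (-s) := by
        gcongr
        linarith [add_one_le_exp (s / m)]
    _ = m ^ m := by
        rw [mul_pow, ← exp_nat_mul, mul_div_cancel₀ _ hm'.ne', mul_assoc, ← exp_add]
        simp

lemma div_one_sub_exp_neg_pow_mul_exp_neg_le (m : ℕ) {s : ℝ} (hs : 0 < s) :
    (s / (1 - exp (-s))) ^ m * exp (-s) ≤ m ^ m :=
  calc (s / (1 - exp (-s))) ^ m * exp (-s) ≤ (1 + s) ^ m * exp (-s) := by
        gcongr
        · exact div_nonneg hs.le (sub_nonneg.2 (exp_le_one_iff.2 (by linarith)))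
        · exact div_one_sub_exp_neg_le hs
    _ ≤ m ^ m := one_add_pow_mul_exp_neg_le m hs.le

lemma tendsto_div_one_sub_exp_neg : Tendsto (fun s => s / (1 - exp (-s))) (𝓝[≠] 0) (𝓝 1) := by
  have hderiv : HasDerivAt (fun s => 1 - exp (-s)) 1 0 := by
    simpa using ((hasDerivAt_neg 0).exp).const_sub 1
  simpa [inv_div, div_eq_inv_mul] using
    (hasDerivAt_iff_tendsto_slope_zero.1 hderiv).inv₀ one_ne_zero

lemma tendsto_exp_neg_nhdsGT_zero : Tendsto (fun s => exp (-s)) (𝓝[>] 0) (𝓝 1) := by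
  simpa using (continuous_neg.rexp.tendsto 0).mono_left nhdsWithin_le_nhds

end Kernel

noncomputable def aQKernel (s : ℝ) : ℝ := (s / (1 - exp (-s))) ^ 3 * (exp (-s) * (1 + exp (-s)))

noncomputable def bQKernel (s : ℝ) : ℝ :=
  (s / (1 - exp (-s))) ^ 4 * (exp (-s) * (1 + 4 * exp (-s) + exp (-s) ^ 2))

lemma abs_aQKernel_le {s : ℝ} (hs : 0 < s) : |aQKernel s| ≤ 54 := by
  have hx := exp_le_one_iff.2 (neg_nonpos.2 hs.le)
  have hg : 0 ≤ s / (1 - exp (-s)) := div_nonneg hs.le (by linarith)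
  rw [abs_of_nonneg (by unfold aQKernel; positivity)]
  calc aQKernel s = (s / (1 - exp (-s))) ^ 3 * exp (-s) * (1 + exp (-s)) := by
        rw [aQKernel]; ring
    _ ≤ (3 : ℕ) ^ 3 * (1 + 1) := by
        gcongr
        exact div_one_sub_exp_neg_pow_mul_exp_neg_le 3 hs
    _ = 54 := by norm_num

lemma abs_bQKernel_le {s : ℝ} (hs : 0 < s) : |bQKernel s| ≤ 1536 := by
  have hx := exp_le_one_iff.2 (neg_nonpos.2 hs.le)
  have hg : 0 ≤ s / (1 - exp (-s)) := div_nonneg hs.le (by linarith)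
  rw [abs_of_nonneg (by unfold bQKernel; positivity)]
  calc bQKernel s = (s / (1 - exp (-s))) ^ 4 * exp (-s) * (1 + 4 * exp (-s) + exp (-s) ^ 2) := by
        rw [bQKernel]; ring
    _ ≤ (4 : ℕ) ^ 4 * (1 + 4 * 1 + 1 ^ 2) := by
        gcongr
        exact div_one_sub_exp_neg_pow_mul_exp_neg_le 4 hs
    _ = 1536 := by norm_num

lemma tendsto_aQKernel : Tendsto aQKernel (𝓝[>] 0) (𝓝 2) := by
  convert ((tendsto_div_one_sub_exp_neg.mono_left (nhdsGT_le_nhdsNE 0)).pow 3).mul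
    (tendsto_exp_neg_nhdsGT_zero.mul (tendsto_exp_neg_nhdsGT_zero.const_add 1)) using 2 <;>
    norm_num [aQKernel]

lemma tendsto_bQKernel : Tendsto bQKernel (𝓝[>] 0) (𝓝 6) := by
  convert ((tendsto_div_one_sub_exp_neg.mono_left (nhdsGT_le_nhdsNE 0)).pow 4).mul
    (tendsto_exp_neg_nhdsGT_zero.mul (((tendsto_exp_neg_nhdsGT_zero.const_mul 4).const_add 1).add
      (tendsto_exp_neg_nhdsGT_zero.pow 2))) using 2 <;>
    norm_num [bQKernel]

lemma exp_neg_succ_mul (k : ℕ) (t : ℝ) : exp (-(((k : ℝ) + 1) * t)) = exp (-t) ^ (k + 1) := by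
  rw [← exp_nat_mul]
  push_cast
  ring_nf

lemma pow_mul_aQ_exp_neg {t : ℝ} (ht : 0 < t) :
    t ^ 3 * aQ (exp (-t)) = ∑' k : ℕ, aQKernel (((k : ℝ) + 1) * t) / ((k : ℝ) + 1) ^ 3 := by
  have hx0 := (exp_pos (-t)).le
  have hx1 : exp (-t) < 1 := exp_lt_one_iff.2 (neg_lt_zero.2 ht)
  rw [aQ_eq_tsum hx0 hx1, ← tsum_mul_left]
  refine tsum_congr fun k => ?_
  have hk : (k : ℝ) + 1 ≠ 0 := by positivity
  have h1 : 1 - exp (-t) ^ (k + 1) ≠ 0 := sub_ne_zero.2 (pow_lt_one₀ hx0 hx1 k.succ_ne_zero).ne'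
  rw [aQKernel, exp_neg_succ_mul]
  field_simp

lemma pow_mul_bQ_exp_neg {t : ℝ} (ht : 0 < t) :
    t ^ 4 * bQ (exp (-t)) = ∑' k : ℕ, bQKernel (((k : ℝ) + 1) * t) / ((k : ℝ) + 1) ^ 3 := by
  have hx0 := (exp_pos (-t)).le
  have hx1 : exp (-t) < 1 := exp_lt_one_iff.2 (neg_lt_zero.2 ht)
  rw [bQ_eq_tsum hx0 hx1, ← tsum_mul_left]
  refine tsum_congr fun k => ?_
  have hk : (k : ℝ) + 1 ≠ 0 := by positivity
  have h1 : 1 - exp (-t) ^ (k + 1) ≠ 0 := sub_ne_zero.2 (pow_lt_one₀ hx0 hx1 k.succ_ne_zero).ne'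
  rw [bQKernel, exp_neg_succ_mul]
  field_simp

section ScaledSum

variable {F : ℝ → ℝ} {C : ℝ} {p : ℕ}

lemma summable_one_div_succ_pow (hp : 1 < p) : Summable (fun k : ℕ => 1 / ((k : ℝ) + 1) ^ p) := by
  simpa using (summable_nat_add_iff 1).2 (Real.summable_one_div_nat_pow.2 hp)

lemma abs_div_succ_pow_le (hF : ∀ s, 0 < s → |F s| ≤ C) {t : ℝ} (ht : 0 < t) (k : ℕ) :
    |F (((k : ℝ) + 1) * t) / ((k : ℝ) + 1) ^ p| ≤ C * (1 / ((k : ℝ) + 1) ^ p) := by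
  rw [abs_div, abs_of_pos (by positivity : (0 : ℝ) < ((k : ℝ) + 1) ^ p), mul_one_div]
  gcongr
  exact hF _ (by positivity)

lemma tendsto_tsum_div_succ_pow (hp : 1 < p) (hF : ∀ s, 0 < s → |F s| ≤ C) {L : ℝ}
    (hFL : Tendsto F (𝓝[>] 0) (𝓝 L)) :
    Tendsto (fun t => ∑' k : ℕ, F (((k : ℝ) + 1) * t) / ((k : ℝ) + 1) ^ p) (𝓝[>] 0)
      (𝓝 (L * ∑' k : ℕ, 1 / ((k : ℝ) + 1) ^ p)) := by
  rw [← tsum_mul_left]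
  refine tendsto_tsum_of_dominated_convergence ((summable_one_div_succ_pow hp).mul_left C)
    (fun k => ?_) ?_
  · have hscale : Tendsto (fun t : ℝ => ((k : ℝ) + 1) * t) (𝓝[>] 0) (𝓝[>] 0) :=
      tendsto_iff_comap.2 (comap_mulLeft_nhdsGT_zero (by positivity)).ge
    rw [mul_one_div]
    exact (hFL.comp hscale).div_const _
  · filter_upwards [self_mem_nhdsWithin] with t ht k
    exact abs_div_succ_pow_le hF ht k

lemma tsum_div_succ_pow_le (hp : 1 < p) (hF : ∀ s, 0 < s → |F s| ≤ C) {t : ℝ} (ht : 0 < t) :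
    ∑' k : ℕ, F (((k : ℝ) + 1) * t) / ((k : ℝ) + 1) ^ p ≤ C * ∑' k : ℕ, 1 / ((k : ℝ) + 1) ^ p := by
  have hb := (summable_one_div_succ_pow hp).mul_left C
  rw [← tsum_mul_left]
  exact Summable.tsum_le_tsum (fun k => (le_abs_self _).trans (abs_div_succ_pow_le hF ht k))
    (hb.of_norm_bounded (abs_div_succ_pow_le hF ht)) hb

end ScaledSum

lemma zeta3_eq_tsum : zeta3 = ∑' k : ℕ, 1 / ((k : ℝ) + 1) ^ 3 := by
  have h : riemannZeta 3 = ((∑' n : ℕ, 1 / (n : ℝ) ^ 3 : ℝ) : ℂ) := by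
    rw [Complex.ofReal_tsum]
    simpa using zeta_nat_eq_tsum_of_gt_one (k := 3) (by norm_num)
  rw [zeta3, h, Complex.ofReal_re, Summable.tsum_eq_zero_add
    (Real.summable_one_div_nat_pow.2 (by norm_num))]
  simp

lemma zeta3_pos : 0 < zeta3 := by
  rw [zeta3_eq_tsum]
  exact (summable_one_div_succ_pow (by norm_num)).tsum_pos (fun _ => by positivity) 0 (by norm_num)

lemma tendsto_pow_mul_aQ_exp_neg :
    Tendsto (fun t => t ^ 3 * aQ (exp (-t))) (𝓝[>] 0) (𝓝 (2 * zeta3)) := by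
  rw [zeta3_eq_tsum]
  refine (tendsto_tsum_div_succ_pow (by norm_num) (fun _ => abs_aQKernel_le)
    tendsto_aQKernel).congr' ?_
  filter_upwards [self_mem_nhdsWithin] with t ht
  exact (pow_mul_aQ_exp_neg ht).symm

lemma tendsto_pow_mul_bQ_exp_neg :
    Tendsto (fun t => t ^ 4 * bQ (exp (-t))) (𝓝[>] 0) (𝓝 (6 * zeta3)) := by
  rw [zeta3_eq_tsum]
  refine (tendsto_tsum_div_succ_pow (by norm_num) (fun _ => abs_bQKernel_le)
    tendsto_bQKernel).congr' ?_
  filter_upwards [self_mem_nhdsWithin] with t ht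
  exact (pow_mul_bQ_exp_neg ht).symm

lemma pow_mul_aQ_exp_neg_le {t : ℝ} (ht : 0 < t) : t ^ 3 * aQ (exp (-t)) ≤ 54 * zeta3 := by
  rw [pow_mul_aQ_exp_neg ht, zeta3_eq_tsum]
  exact tsum_div_succ_pow_le (by norm_num) (fun _ => abs_aQKernel_le) ht

lemma tendsto_nhdsGT_zero_of_mul_pow_le {d : ℕ → ℝ} {C : ℝ} {p : ℕ} (hp : p ≠ 0)
    (hd : ∀ᶠ n in atTop, 0 < d n ∧ n * d n ^ p ≤ C) : Tendsto d atTop (𝓝[>] 0) := by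
  have hpow : Tendsto (fun n => d n ^ p) atTop (𝓝 0) := by
    refine tendsto_of_tendsto_of_tendsto_of_le_of_le' tendsto_const_nhds
      (tendsto_const_div_atTop_nhds_zero_nat C) (hd.mono fun n h => pow_nonneg h.1.le p) ?_
    filter_upwards [hd, eventually_gt_atTop 0] with n h hn
    rw [le_div_iff₀ (Nat.cast_pos.2 hn), mul_comm]
    exact h.2
  have hroot := hpow.rpow_const (p := (p : ℝ)⁻¹) (Or.inr (by positivity))
  rw [zero_rpow (by positivity)] at hroot
  refine tendsto_nhdsWithin_of_tendsto_nhds_of_eventually_within _ (hroot.congr' ?_)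
    (hd.mono fun n h => h.1)
  filter_upwards [hd] with n h
  exact pow_rpow_inv_natCast h.1.le hp

lemma isEquivalent_of_tendsto_mul_pow {b d : ℕ → ℝ} {A B : ℝ} {p q : ℕ} (hA : 0 < A) (hB : B ≠ 0)
    (hp : p ≠ 0) (hd : ∀ᶠ n in atTop, 0 < d n)
    (hnd : Tendsto (fun n : ℕ => n * d n ^ p) atTop (𝓝 A))
    (hdb : Tendsto (fun n => d n ^ q * b n) atTop (𝓝 B)) :
    b ~[atTop] fun n => B * (n : ℝ) ^ ((q : ℝ) / p) / A ^ ((q : ℝ) / p) := by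
  have hu : (fun n : ℕ => (n * d n ^ p) ^ ((q : ℝ) / p)) ~[atTop]
      Function.const ℕ (A ^ ((q : ℝ) / p)) :=
    (isEquivalent_const_iff_tendsto (rpow_pos_of_pos hA _).ne').2
      (hnd.rpow_const (Or.inl hA.ne'))
  have hv := (isEquivalent_const_iff_tendsto hB).2 hdb
  refine ((hv.mul (IsEquivalent.refl (u := fun n : ℕ => (n : ℝ) ^ ((q : ℝ) / p)))).div
    hu).congr_left ?_
  filter_upwards [hd, eventually_gt_atTop 0] with n hdn hn
  have hn' : (0 : ℝ) < n := Nat.cast_pos.2 hn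
  have hsplit : ((n : ℝ) * d n ^ p) ^ ((q : ℝ) / p) = (n : ℝ) ^ ((q : ℝ) / p) * d n ^ q := by
    rw [mul_rpow hn'.le (by positivity), ← rpow_natCast (d n) p, ← rpow_mul hdn.le,
      mul_div_cancel₀ _ (Nat.cast_ne_zero.2 hp), rpow_natCast]
  simp only [Pi.div_apply, Pi.mul_apply, hsplit]
  field_simp

theorem stmt_2 (d : ℕ → ℝ)
    (hd : ∀ᶠ n : ℕ in atTop,
      0 < d n ∧ aQ (Real.exp (-d n)) = n ∧
      ∀ t : ℝ, 0 < t → aQ (Real.exp (-t)) = n → t = d n) :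
    (fun n : ℕ => bQ (Real.exp (-d n)))
      ~[atTop] fun n : ℕ => 3 * (n : ℝ) ^ ((4:ℝ)/3) / (2 * zeta3) ^ ((1:ℝ)/3) := by
  have hz := zeta3_pos
  have hnd : ∀ᶠ n : ℕ in atTop, d n ^ 3 * aQ (exp (-d n)) = n * d n ^ 3 :=
    hd.mono fun n h => by rw [h.2.1, mul_comm]
  have hd0 : Tendsto d atTop (𝓝[>] 0) :=
    tendsto_nhdsGT_zero_of_mul_pow_le (C := 54 * zeta3) three_ne_zero <|
      (hd.and hnd).mono fun n h => ⟨h.1.1, h.2 ▸ pow_mul_aQ_exp_neg_le h.1.1⟩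
  have hA := (tendsto_pow_mul_aQ_exp_neg.comp hd0).congr' hnd
  have hB := tendsto_pow_mul_bQ_exp_neg.comp hd0
  refine (isEquivalent_of_tendsto_mul_pow (by positivity) (by positivity) three_ne_zero
    (hd.mono fun n h => h.1) hA hB).congr_right (Eventually.of_forall fun n => ?_)
  have h2z : (0 : ℝ) < 2 * zeta3 := by positivity
  have h43 : (2 * zeta3) ^ ((4 : ℝ) / 3) = 2 * zeta3 * (2 * zeta3) ^ ((1 : ℝ) / 3) := by
    rw [show (4 : ℝ) / 3 = 1 + 1 / 3 by norm_num, rpow_add h2z, rpow_one]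
  push_cast
  rw [h43]
  field_simp
  ring
end

section
/- There exists a constant C>0 such that for all sufficiently small t>0 and all real θ with t ≤ |θ| ≤ π, one has |Q(e^{−t+iθ})| ≤ Q(e^{−t})·e^{−C/t}. -/
open Filter Asymptotics

/-- MacMahon's plane-partition generating function. -/
noncomputable def Q (x : ℂ) : ℂ := ∏' j : ℕ, (1 - x ^ (j + 1)) ^ (-(j + 1 : ℤ))

/-!
Taking logarithms, `‖Q x‖ = exp (-∑ j, j * log ‖1 - x ^ j‖)`, and each factor satisfies
`‖1 - x ^ j‖ ≥ 1 - ‖x‖ ^ j`, so `‖Q x‖ ≤ Q ‖x‖`. For `x = e^{-t+iθ}` with `t ≤ |θ| ≤ π` there is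
an `n` with `n t ∈ [1, 2 + 5π/2]` and `cos (n θ) ≤ 0`. Then `Re (x ^ n) ≤ 0`, so `‖1 - x ^ n‖ ≥ 1`,
whereas the `n`-th term of `log Q (e^{-t})` is `-n log (1 - e^{-nt}) ≥ n e^{-nt} ≫ 1 / t`.
-/

lemma tsum_add_le_tsum {ι : Type*} {f g : ι → ℝ} (hf : Summable f) (hg : Summable g)
    (h : ∀ i, f i ≤ g i) (i : ι) {c : ℝ} (hi : f i + c ≤ g i) :
    ∑' i, f i + c ≤ ∑' i, g i := by
  have := (hg.sub hf).le_tsum i fun j _ ↦ sub_nonneg.2 (h j)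
  rw [hg.tsum_sub hf] at this
  linarith

section

open Complex

lemma summable_mul_log_one_sub_pow {x : ℂ} (hx : ‖x‖ < 1) :
    Summable fun j : ℕ ↦ ((j : ℂ) + 1) * log (1 - x ^ (j + 1)) := by
  have hgeom : Summable fun j : ℕ ↦ ((j : ℝ) + 1) * ‖x‖ ^ (j + 1) := by
    have := summable_pow_mul_geometric_of_norm_lt_one 1 (r := ‖x‖) (by simpa using hx)
    simpa using (summable_nat_add_iff 1).2 this
  have hsmall : ∀ᶠ j : ℕ in atTop, ‖x‖ ^ (j + 1) ≤ 1 / 2 :=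
    ((tendsto_pow_atTop_nhds_zero_of_lt_one (norm_nonneg x) hx).comp
      (tendsto_add_atTop_nat 1)).eventually_le_const one_half_pos
  refine (hgeom.mul_left (3 / 2)).of_norm_bounded_eventually_nat ?_
  filter_upwards [hsmall] with j hj
  have hlog := norm_log_one_add_half_le_self (z := -x ^ (j + 1)) (by simpa using hj)
  rw [← sub_eq_add_neg, norm_neg, norm_pow] at hlog
  rw [norm_mul, show ‖(j : ℂ) + 1‖ = (j : ℝ) + 1 by norm_cast, mul_left_comm]
  gcongr

lemma Q_eq_cexp_tsum {x : ℂ} (hx : ‖x‖ < 1) :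
    Q x = cexp (-∑' j : ℕ, ((j : ℂ) + 1) * log (1 - x ^ (j + 1))) := by
  rw [← tsum_neg, Q, ← (summable_mul_log_one_sub_pow hx).neg.hasSum.cexp.tprod_eq]
  refine tprod_congr fun j ↦ ?_
  have hne : 1 - x ^ (j + 1) ≠ 0 := sub_ne_zero.2 fun h ↦
    (pow_lt_one₀ (norm_nonneg x) hx j.succ_ne_zero).ne (by simpa using congrArg norm h.symm)
  rw [Function.comp_apply, ← neg_mul,
    show -((j : ℂ) + 1) = ((-(j + 1 : ℤ) : ℤ) : ℂ) by push_cast; ring, exp_int_mul, exp_log hne]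

lemma summable_mul_log_norm_one_sub_pow {x : ℂ} (hx : ‖x‖ < 1) :
    Summable fun j : ℕ ↦ ((j : ℝ) + 1) * Real.log ‖1 - x ^ (j + 1)‖ :=
  (reCLM.summable (summable_mul_log_one_sub_pow hx)).congr fun j ↦ by simp [log_re]

lemma norm_Q_eq_rexp_tsum {x : ℂ} (hx : ‖x‖ < 1) :
    ‖Q x‖ = Real.exp (-∑' j : ℕ, ((j : ℝ) + 1) * Real.log ‖1 - x ^ (j + 1)‖) := by
  rw [Q_eq_cexp_tsum hx, norm_exp, neg_re, re_tsum (summable_mul_log_one_sub_pow hx)]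
  simp [log_re]

lemma norm_one_sub_ofReal_pow {r : ℝ} (hr0 : 0 ≤ r) (hr1 : r ≤ 1) (m : ℕ) :
    ‖1 - (r : ℂ) ^ m‖ = 1 - r ^ m := by
  rw [← ofReal_pow, ← ofReal_one, ← ofReal_sub, norm_real, Real.norm_eq_abs,
    abs_of_nonneg (sub_nonneg.2 (pow_le_one₀ hr0 hr1))]

lemma one_sub_norm_pow_le (x : ℂ) (m : ℕ) : 1 - ‖x‖ ^ m ≤ ‖1 - x ^ m‖ := by
  simpa using norm_sub_norm_le (1 : ℂ) (x ^ m)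

lemma one_le_norm_one_sub {z : ℂ} (hz : z.re ≤ 0) : 1 ≤ ‖1 - z‖ :=
  le_trans (by simpa using hz) (re_le_norm (1 - z))

lemma norm_Q_le_of_re_pow_nonpos {x : ℂ} (hx : ‖x‖ < 1) {n : ℕ} (hn : (x ^ n).re ≤ 0) :
    ‖Q x‖ ≤ ‖Q ‖x‖‖ * Real.exp (-(n * ‖x‖ ^ n)) := by
  obtain ⟨m, rfl⟩ : ∃ m, n = m + 1 :=
    Nat.exists_eq_add_one.2 (Nat.pos_of_ne_zero (by rintro rfl; norm_num at hn))
  have hr : ‖(‖x‖ : ℂ)‖ < 1 := by simpa using hx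
  have hpos (j : ℕ) : 0 < 1 - ‖x‖ ^ (j + 1) :=
    sub_pos.2 (pow_lt_one₀ (norm_nonneg x) hx j.succ_ne_zero)
  rw [norm_Q_eq_rexp_tsum hx, norm_Q_eq_rexp_tsum hr, ← Real.exp_add, Real.exp_le_exp,
    ← neg_add, neg_le_neg_iff]
  simp only [norm_one_sub_ofReal_pow (norm_nonneg x) hx.le]
  refine tsum_add_le_tsum ?_ (summable_mul_log_norm_one_sub_pow hx) (fun j ↦ ?_) m ?_
  · simpa only [norm_one_sub_ofReal_pow (norm_nonneg x) hx.le]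
      using summable_mul_log_norm_one_sub_pow hr
  · gcongr
    · exact hpos j
    · exact one_sub_norm_pow_le x _
  · have hgain : Real.log (1 - ‖x‖ ^ (m + 1)) ≤ -‖x‖ ^ (m + 1) := by
      linarith [Real.log_le_sub_one_of_pos (hpos m)]
    have hfactor : 0 ≤ Real.log ‖1 - x ^ (m + 1)‖ := Real.log_nonneg (one_le_norm_one_sub hn)
    push_cast
    nlinarith

end

open Real

lemma exists_cos_nat_mul_nonpos {t θ : ℝ} (ht : 0 < t) (htθ : t ≤ |θ|) (hθ : |θ| ≤ π) :
    ∃ n : ℕ, 1 ≤ n * t ∧ n * t ≤ 1 + t + 5 * π / 2 ∧ cos (n * θ) ≤ 0 := by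
  set φ := |θ|
  have hφ : 0 < φ := ht.trans_le htθ
  have hπ : 0 < π := pi_pos
  -- `2πK ≥ φ / t` and `n` is least with `nφ ≥ 2πK + π/2`; as `φ ≤ π`, `nφ - 2πK ∈ [π/2, 3π/2]`.
  set K := ⌈φ / (2 * π * t)⌉₊
  set n := ⌈(2 * π * K + π / 2) / φ⌉₊
  have hK₁ : φ / (2 * π * t) ≤ K := Nat.le_ceil _
  have hK₂ : (K : ℝ) < φ / (2 * π * t) + 1 := Nat.ceil_lt_add_one (by positivity)
  have hn₁ : (2 * π * K + π / 2) / φ ≤ n := Nat.le_ceil _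
  have hn₂ : (n : ℝ) < (2 * π * K + π / 2) / φ + 1 := Nat.ceil_lt_add_one (by positivity)
  rw [div_le_iff₀ (by positivity)] at hK₁
  rw [div_le_iff₀ hφ] at hn₁
  rw [div_add_one hφ.ne', lt_div_iff₀ hφ] at hn₂
  rw [← sub_lt_iff_lt_add, lt_div_iff₀ (by positivity)] at hK₂
  refine ⟨n, ?_, ?_, ?_⟩
  · refine le_of_mul_le_mul_left ?_ hφ
    nlinarith [mul_le_mul_of_nonneg_right hn₁ ht.le]
  · refine le_of_mul_le_mul_left ?_ hφ
    nlinarith [mul_lt_mul_of_pos_right hn₂ ht]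
  · rw [← cos_abs, abs_mul, Nat.abs_cast, ← cos_sub_nat_mul_two_pi _ K]
    apply cos_nonpos_of_pi_div_two_le_of_le <;> nlinarith

theorem stmt_3 :
    ∃ C > (0:ℝ), ∃ t₀ > (0:ℝ), ∀ t : ℝ, 0 < t → t < t₀ →
      ∀ θ : ℝ, t ≤ |θ| → |θ| ≤ Real.pi →
        ‖Q (Complex.exp (-(t:ℂ) + θ * Complex.I))‖
          ≤ ‖Q (Real.exp (-t))‖ * Real.exp (-C / t) := by
  refine ⟨Real.exp (-(2 + 5 * π / 2)), Real.exp_pos _, 1, one_pos, fun t ht ht₁ θ htθ hθ ↦ ?_⟩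
  obtain ⟨n, hnt₁, hnt₂, hcos⟩ := exists_cos_nat_mul_nonpos ht htθ hθ
  set x := Complex.exp (-(t : ℂ) + θ * Complex.I)
  have hx : ‖x‖ = Real.exp (-t) := by simp [x, Complex.norm_exp]
  have hre : (x ^ n).re ≤ 0 := by
    rw [← Complex.exp_nat_mul, Complex.exp_re]
    exact mul_nonpos_of_nonneg_of_nonpos (Real.exp_pos _).le (by simpa using hcos)
  refine (norm_Q_le_of_re_pow_nonpos (hx ▸ Real.exp_lt_one_iff.2 (by linarith)) hre).trans ?_
  have hdecay : Real.exp (-(2 + 5 * π / 2)) ≤ Real.exp (-t) ^ n := by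
    rw [← Real.exp_nat_mul, Real.exp_le_exp]
    linarith
  rw [hx]
  gcongr
  rw [neg_div, neg_le_neg_iff, div_le_iff₀ ht]
  nlinarith [mul_le_mul hnt₁ hdecay (Real.exp_pos _).le (by positivity)]
end

section
/- Let F₁(x) = Σ_{j=1}^∞ j x^j/(1−x^j) for |x|<1. Then F₁(e^{−t}) ~ ζ(2)/t² = π²/(6t²) as t→0+. -/
/-!
Expanding each `x^j/(1 - x^j)` as a geometric series and summing the double series the other
way gives the Lambert identity `F₁(x) = ∑ₙ xⁿ/(1 - xⁿ)²`, and at `x = e^{-t}` the `n`-th term is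
`1/(4 sinh²(nt/2))`. Hence `t² F₁(e^{-t}) = ∑ₙ n⁻² ((nt/2)/sinh(nt/2))²`: each term tends to
`n⁻²` as `t → 0⁺` and is bounded by `n⁻²` because `sinh v ≥ v`, so by Tannery's theorem
`t² F₁(e^{-t}) → ζ(2) = π²/6`.
-/

open Filter Asymptotics

/-- `F₁(x) = Σ_{j≥1} j xʲ/(1-xʲ)`. -/
noncomputable def F₁ (x : ℝ) : ℝ := ∑' j : ℕ, (j + 1 : ℝ) * x ^ (j + 1) / (1 - x ^ (j + 1))

open Topology Real

section Lambert

variable {𝕜 : Type*} [NontriviallyNormedField 𝕜]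

theorem norm_pow_pnat_lt_one {r : 𝕜} (hr : ‖r‖ < 1) (n : ℕ+) : ‖r ^ (n : ℕ)‖ < 1 := by
  rw [norm_pow]; exact pow_lt_one₀ (norm_nonneg _) hr n.ne_zero

theorem tsum_pnat_pow_mul_eq_div_one_sub {r : 𝕜} (hr : ‖r‖ < 1) (n : ℕ+) :
    ∑' d : ℕ+, r ^ (n * d : ℕ) = r ^ (n : ℕ) / (1 - r ^ (n : ℕ)) := by
  simp_rw [pow_mul, tsum_pnat_eq_tsum_succ (f := fun d => (r ^ (n : ℕ)) ^ d), pow_succ',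
    tsum_mul_left, tsum_geometric_of_norm_lt_one (norm_pow_pnat_lt_one hr n), div_eq_mul_inv]

theorem tsum_pnat_mul_pow_mul_eq_div_one_sub_sq {r : 𝕜} (hr : ‖r‖ < 1) (n : ℕ+) :
    ∑' c : ℕ+, (c : 𝕜) * r ^ (n * c : ℕ) = r ^ (n : ℕ) / (1 - r ^ (n : ℕ)) ^ 2 := by
  simp_rw [pow_mul]
  rw [tsum_pnat_eq_tsum_of_eq_zero (f := fun c : ℕ => (c : 𝕜) * (r ^ (n : ℕ)) ^ c) (by simp)]
  exact (hasSum_coe_mul_geometric_of_norm_lt_one (norm_pow_pnat_lt_one hr n)).tsum_eq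

theorem tsum_pnat_mul_pow_div_one_sub_eq_tsum_pow_div_one_sub_sq [CompleteSpace 𝕜]
    [NormSMulClass ℤ 𝕜] {r : 𝕜} (hr : ‖r‖ < 1) :
    ∑' n : ℕ+, (n : 𝕜) * r ^ (n : ℕ) / (1 - r ^ (n : ℕ))
      = ∑' n : ℕ+, r ^ (n : ℕ) / (1 - r ^ (n : ℕ)) ^ 2 := by
  have hsum : Summable (Function.uncurry fun d c : ℕ+ => (c : 𝕜) * r ^ (d * c : ℕ)) := by
    simpa [Function.uncurry_def] using summable_prod_mul_pow 1 hr
  calc ∑' n : ℕ+, (n : 𝕜) * r ^ (n : ℕ) / (1 - r ^ (n : ℕ))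
      = ∑' (c : ℕ+) (d : ℕ+), (c : 𝕜) * r ^ (d * c : ℕ) := by
        refine tsum_congr fun c => ?_
        rw [tsum_mul_left, mul_div_assoc, ← tsum_pnat_pow_mul_eq_div_one_sub hr c]
        exact congrArg _ (tsum_congr fun d => by rw [mul_comm])
    _ = ∑' (d : ℕ+) (c : ℕ+), (c : 𝕜) * r ^ (d * c : ℕ) := hsum.tsum_comm
    _ = _ := tsum_congr fun d => tsum_pnat_mul_pow_mul_eq_div_one_sub_sq hr d

end Lambert

theorem F₁_eq_tsum_pnat (x : ℝ) :
    F₁ x = ∑' n : ℕ+, (n : ℝ) * x ^ (n : ℕ) / (1 - x ^ (n : ℕ)) := by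
  rw [F₁, tsum_pnat_eq_tsum_succ (f := fun n : ℕ => (n : ℝ) * x ^ n / (1 - x ^ n))]
  push_cast
  rfl

theorem exp_neg_div_one_sub_exp_neg_sq (u : ℝ) :
    exp (-u) / (1 - exp (-u)) ^ 2 = 1 / (2 * sinh (u / 2)) ^ 2 := by
  have h : 2 * sinh (u / 2) = exp (u / 2) * (1 - exp (-u)) := by
    rw [sinh_eq, mul_sub, ← exp_add]; ring_nf
  rw [h, mul_pow, ← exp_nat_mul, one_div, mul_inv, ← exp_neg, div_eq_mul_inv]
  congr 2
  push_cast
  ring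

theorem tendsto_div_sinh_nhdsGT_zero : Tendsto (fun v => v / sinh v) (𝓝[>] 0) (𝓝 1) := by
  have h := (hasDerivAt_sinh 0).tendsto_slope_zero_right
  simp only [zero_add, sinh_zero, sub_zero, cosh_zero, smul_eq_mul] at h
  simpa [inv_mul_eq_div] using h.inv₀ one_ne_zero

theorem div_sinh_le_one {v : ℝ} (hv : 0 < v) : v / sinh v ≤ 1 :=
  (div_le_one (sinh_pos_iff.2 hv)).2 (self_le_sinh_iff.2 hv.le)

theorem hasSum_pnat_one_div_sq : HasSum (fun n : ℕ+ => 1 / (n : ℝ) ^ 2) (π ^ 2 / 6) :=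
  (hasSum_pnat_iff (f := fun n : ℕ => 1 / (n : ℝ) ^ 2)).2 <| by
    rw [Nat.cast_zero, zero_pow two_ne_zero, div_zero, add_zero]
    exact hasSum_zeta_two

theorem F₁_exp_neg {t : ℝ} (ht : 0 < t) :
    F₁ (exp (-t)) = ∑' n : ℕ+, 1 / (2 * sinh (n * t / 2)) ^ 2 := by
  have hx : ‖exp (-t)‖ < 1 := by
    rw [norm_of_nonneg (exp_pos _).le, exp_lt_one_iff]; linarith
  rw [F₁_eq_tsum_pnat, tsum_pnat_mul_pow_div_one_sub_eq_tsum_pow_div_one_sub_sq hx]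
  refine tsum_congr fun n => ?_
  rw [← exp_nat_mul, ← exp_neg_div_one_sub_exp_neg_sq]
  ring_nf

theorem tendsto_sq_mul_F₁_exp_neg :
    Tendsto (fun t => t ^ 2 * F₁ (exp (-t))) (𝓝[>] 0) (𝓝 (π ^ 2 / 6)) := by
  have hlim := tendsto_tsum_of_dominated_convergence (𝓕 := 𝓝[>] (0 : ℝ))
    (f := fun t (n : ℕ+) => 1 / (n : ℝ) ^ 2 * ((n * t / 2) / sinh (n * t / 2)) ^ 2)
    (g := fun n => 1 / (n : ℝ) ^ 2) hasSum_pnat_one_div_sq.summable ?_ ?_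
  · rw [hasSum_pnat_one_div_sq.tsum_eq] at hlim
    refine hlim.congr' ?_
    filter_upwards [self_mem_nhdsWithin] with t ht
    rw [F₁_exp_neg ht, ← tsum_mul_left]
    refine tsum_congr fun n => ?_
    field_simp
  · intro n
    have hscale : Tendsto (fun t : ℝ => n * t / 2) (𝓝[>] 0) (𝓝[>] 0) := by
      refine tendsto_nhdsWithin_iff.2 ⟨?_, ?_⟩
      · exact (Continuous.tendsto' (by fun_prop) 0 0 (by simp)).mono_left nhdsWithin_le_nhds
      · filter_upwards [self_mem_nhdsWithin] with t (ht : 0 < t)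
        exact show 0 < (n : ℝ) * t / 2 by positivity
    simpa only [one_pow, mul_one, Function.comp_def] using
      ((tendsto_div_sinh_nhdsGT_zero.comp hscale).pow 2).const_mul (1 / (n : ℝ) ^ 2)
  · filter_upwards [self_mem_nhdsWithin] with t (ht : 0 < t) n
    have hv : 0 < (n : ℝ) * t / 2 := by positivity
    rw [norm_of_nonneg (by positivity)]
    exact mul_le_of_le_one_right (by positivity)
      (pow_le_one₀ (div_nonneg hv.le (sinh_pos_iff.2 hv).le) (div_sinh_le_one hv))

theorem stmt_10 :
    (fun t : ℝ => F₁ (Real.exp (-t)))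
      ~[nhdsWithin 0 (Set.Ioi 0)] fun t : ℝ => Real.pi ^ 2 / (6 * t ^ 2) := by
  refine isEquivalent_of_tendsto_one ?_
  convert tendsto_sq_mul_F₁_exp_neg.div_const (π ^ 2 / 6) using 2 with t
  · simp only [Pi.div_apply]
    field_simp
  · exact (div_self (by positivity)).symm
end
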